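/- For every ε > 0 there exists a constant c > 0 such that for infinitely many k there is a finite undirected graph G with positive edge lengths and a set T of k terminals with the following property: every minor H of G (no terminal deleted, no two terminals contracted together) whose terminal shortest-path distances satisfy d_G(t,t') ≤ d_H(t,t') ≤ (2−ε)·d_G(t,t') for all t,t' ∈ T must contain at least c·k² non-terminal vertices. -/

import Mathlib

/-- A finite undirected graph with real edge lengths and a designated terminal set. -/
structure TermGraph where
  V : Type
  fintypeV : Fintype V
  decEqV : DecidableEq V
  G : SimpleGraph V
  len : V → V → ℝ
  T : Finset V

attribute [instance] TermGraph.fintypeV TermGraph.decEqV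

/-- The length of a walk: the sum of the lengths of its edges. -/
def walkLen {V : Type} (len : V → V → ℝ) {G : SimpleGraph V} {u v : V}
    (p : G.Walk u v) : ℝ :=
  (p.darts.map fun d => len d.toProd.1 d.toProd.2).sum

/-- Shortest-path distance in a graph with edge lengths `len`. -/
noncomputable def gdist {V : Type} (G : SimpleGraph V) (len : V → V → ℝ) (u v : V) : ℝ :=
  sInf {r : ℝ | ∃ p : G.Walk u v, walkLen len p = r}

namespace TermGraph

/-- Shortest-path distance between two vertices of a `TermGraph`. -/
noncomputable def dist (X : TermGraph) (u v : X.V) : ℝ :=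
  gdist X.G X.len u v

/-- The edge lengths are symmetric and positive on edges. -/
def goodLen (X : TermGraph) : Prop :=
  (∀ u v : X.V, X.len u v = X.len v u) ∧
  (∀ u v : X.V, X.G.Adj u v → 0 < X.len u v)

end TermGraph

/-- A terminal-preserving minor of `X`: a weighted graph `Y` together with a partial
partition of `V(X)` into nonempty, pairwise disjoint, connected branch sets indexed
by the vertices of `Y`.  Edges of `Y` may appear only between branch sets joined by an
edge of `X`; each terminal of `X` lies in exactly one branch set (`node` sends it to
that super-node), no two terminals lie in the same branch set, and the terminals of `Y`
are exactly the super-nodes of the terminals of `X`.  `Y` carries its own edge lengths. -/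
structure MinorOf (X : TermGraph) where
  Y : TermGraph
  branch : Y.V → Finset X.V
  branch_nonempty : ∀ w, (branch w).Nonempty
  branch_connected : ∀ w, (X.G.induce ((branch w : Set X.V))).Connected
  branch_disjoint : ∀ w w', w ≠ w' → Disjoint (branch w) (branch w')
  adj_mapsDown : ∀ w w', Y.G.Adj w w' →
    ∃ u ∈ branch w, ∃ v ∈ branch w', X.G.Adj u v
  node : X.V → Y.V
  node_mem : ∀ t ∈ X.T, t ∈ branch (node t)
  node_inj : ∀ t ∈ X.T, ∀ t' ∈ X.T, node t = node t' → t = t'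
  node_terminal : ∀ t ∈ X.T, node t ∈ Y.T
  terminal_node : ∀ w ∈ Y.T, ∃ t ∈ X.T, node t = w

namespace MinorOf

variable {X : TermGraph}

/-- The number of non-terminal vertices of the minor. -/
def nonTerms (M : MinorOf X) : ℕ := (Finset.univ \ M.Y.T).card

/-- All terminal distances in the minor dominate the corresponding distances in `X`. -/
def Dominates (M : MinorOf X) : Prop :=
  ∀ t ∈ X.T, ∀ t' ∈ X.T, X.dist t t' ≤ M.Y.dist (M.node t) (M.node t')

/-- `M` is an `α`-distance approximating minor of `X`:
`d_X(t,t') ≤ d_M(t,t') ≤ α·d_X(t,t')` for all terminals `t, t'`. -/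
def IsDAM (M : MinorOf X) (α : ℝ) : Prop :=
  ∀ t ∈ X.T, ∀ t' ∈ X.T,
    X.dist t t' ≤ M.Y.dist (M.node t) (M.node t') ∧
    M.Y.dist (M.node t) (M.node t') ≤ α * X.dist t t'

end MinorOf

/-!
Take the incidence graph of the addition table of `ZMod m`, with unit edge lengths: the `3m`
terminals are its rows, columns and symbols ("lines"), and each of the `m²` cells `(x, y)` is
joined to row `x`, column `y` and symbol `x + y`. Distinct lines are at distance at least `2`,
and two lines of different kinds are at distance exactly `2`, through their unique common cell.

Let `M` be a minor of distortion `< 2` and `z` the common cell of lines `s₁, s₂`. If `z` is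
neither its own branch set nor merged into the branch set of `s₁` or `s₂`, then every walk of
`M` from `s₁` to `s₂` runs through a third terminal, so `d_M(s₁, s₂) ≥ 4`, a contradiction.
Since `z` can be merged into at most one of its three lines, every cell is a singleton branch
set of `M`, so `M` has at least `m² = k² / 9` non-terminals.
-/

section WalkLen

variable {V : Type} {G : SimpleGraph V} {len : V → V → ℝ}

@[simp] lemma walkLen_nil {u : V} : walkLen len (SimpleGraph.Walk.nil : G.Walk u u) = 0 := rfl

@[simp] lemma walkLen_cons {u v w : V} (h : G.Adj u v) (p : G.Walk v w) :
    walkLen len (.cons h p) = len u v + walkLen len p := by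
  simp [walkLen]

lemma walkLen_append {u v w : V} (p : G.Walk u v) (q : G.Walk v w) :
    walkLen len (p.append q) = walkLen len p + walkLen len q := by
  simp [walkLen, SimpleGraph.Walk.darts_append]

lemma walkLen_const (c : ℝ) {u v : V} (p : G.Walk u v) :
    walkLen (fun _ _ => c) p = p.length * c := by
  induction p with
  | nil => simp
  | cons h p ih => simp only [walkLen_cons, ih, SimpleGraph.Walk.length_cons]; push_cast; ring

lemma walkLen_nonneg (hlen : ∀ a b, 0 ≤ len a b) {u v : V} (p : G.Walk u v) :
    0 ≤ walkLen len p :=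
  List.sum_nonneg (by simp only [List.mem_map]; rintro _ ⟨d, -, rfl⟩; exact hlen _ _)

lemma gdist_le_walkLen (hlen : ∀ a b, 0 ≤ len a b) {u v : V} (p : G.Walk u v) :
    gdist G len u v ≤ walkLen len p :=
  csInf_le ⟨0, by rintro _ ⟨q, rfl⟩; exact walkLen_nonneg hlen q⟩ ⟨p, rfl⟩

lemma le_gdist {c : ℝ} {u v : V} (huv : G.Reachable u v)
    (h : ∀ p : G.Walk u v, c ≤ walkLen len p) : c ≤ gdist G len u v :=
  le_csInf (huv.elim fun p => ⟨_, p, rfl⟩) (by rintro _ ⟨p, rfl⟩; exact h p)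

/-- The sign condition on `c` rules out the junk value `gdist = 0` of walk lengths unbounded
below. -/
lemma le_walkLen_of_le_gdist {c : ℝ} (hc : 0 < c) {u v : V} (h : c ≤ gdist G len u v)
    (p : G.Walk u v) : c ≤ walkLen len p := by
  by_cases hbdd : BddBelow {r : ℝ | ∃ q : G.Walk u v, walkLen len q = r}
  · exact h.trans (csInf_le hbdd ⟨p, rfl⟩)
  · rw [gdist, Real.sInf_of_not_bddBelow hbdd] at h
    linarith

lemma reachable_of_pos_gdist {u v : V} (h : 0 < gdist G len u v) : G.Reachable u v := by
  by_contra huv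
  have hempty : {r : ℝ | ∃ p : G.Walk u v, walkLen len p = r} = ∅ :=
    Set.eq_empty_of_forall_notMem fun _ ⟨p, _⟩ => huv ⟨p⟩
  rw [gdist, hempty, Real.sInf_empty] at h
  exact lt_irrefl 0 h

lemma add_le_walkLen_of_mem_support {a b : ℝ} (ha : 0 < a) (hb : 0 < b) {u v x : V}
    (hux : a ≤ gdist G len u x) (hxv : b ≤ gdist G len x v) {p : G.Walk u v}
    (hx : x ∈ p.support) : a + b ≤ walkLen len p := by
  obtain ⟨q, r, rfl⟩ := SimpleGraph.Walk.mem_support_iff_exists_append.mp hx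
  rw [walkLen_append]
  exact add_le_add (le_walkLen_of_le_gdist ha hux q) (le_walkLen_of_le_gdist hb hxv r)

end WalkLen

namespace MinorOf

variable {X : TermGraph} (M : MinorOf X)

lemma IsDAM.dominates {M : MinorOf X} {α : ℝ} (hM : M.IsDAM α) : M.Dominates :=
  fun t ht t' ht' => (hM t ht t' ht').1

lemma eq_node_of_mem_branch {t : X.V} (ht : t ∈ X.T) {w : M.Y.V} (h : t ∈ M.branch w) :
    w = M.node t := by
  by_contra hne
  exact Finset.disjoint_left.mp (M.branch_disjoint _ _ hne) h (M.node_mem t ht)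

lemma eq_of_mem_branch_node {t t' : X.V} (ht : t ∈ X.T) (ht' : t' ∈ X.T)
    (h : t' ∈ M.branch (M.node t)) : t' = t :=
  M.node_inj _ ht' _ ht (M.eq_node_of_mem_branch ht' h).symm

lemma exists_adj_mem_branch {w : M.Y.V} {u v : X.V} (hu : u ∈ M.branch w)
    (hv : v ∈ M.branch w) (hne : u ≠ v) : ∃ c ∈ M.branch w, X.G.Adj u c := by
  obtain ⟨p⟩ := (M.branch_connected w).preconnected ⟨u, hu⟩ ⟨v, hv⟩
  cases p with
  | nil => exact absurd rfl hne
  | @cons _ c _ h _ => exact ⟨c, c.2, h⟩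

lemma notMem_T_of_mem_branch {w : M.Y.V} (hw : w ∉ M.Y.T) {v : X.V}
    (hv : v ∈ M.branch w) : v ∉ X.T :=
  fun hvT => hw (M.eq_node_of_mem_branch hvT hv ▸ M.node_terminal v hvT)

lemma card_le_nonTerms {S : Finset X.V} (hST : ∀ v ∈ S, v ∉ X.T)
    (hS : ∀ v ∈ S, ∃ w, M.branch w = {v}) : S.card ≤ M.nonTerms := by
  refine Finset.card_le_card_of_forall_subsingleton (fun v w => M.branch w = {v})
    (fun v hv => ?_) (fun w _ a ha b hb => Finset.singleton_injective (ha.2.symm.trans hb.2))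
  obtain ⟨w, hw⟩ := hS v hv
  refine ⟨w, Finset.mem_sdiff.mpr ⟨Finset.mem_univ _, fun hwT => ?_⟩, hw⟩
  obtain ⟨t, ht, rfl⟩ := M.terminal_node _ hwT
  have htv := M.node_mem t ht
  rw [hw, Finset.mem_singleton] at htv
  exact hST v hv (htv ▸ ht)

lemma adj_of_mem_branch_node (hX : X.G.IsBipartiteWith X.T (↑X.T)ᶜ) {t v : X.V}
    (ht : t ∈ X.T) (hv : v ∈ M.branch (M.node t)) (hvT : v ∉ X.T) : X.G.Adj v t := by
  obtain ⟨c, hc, hvc⟩ :=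
    M.exists_adj_mem_branch hv (M.node_mem t ht) (by rintro rfl; exact hvT ht)
  rwa [M.eq_of_mem_branch_node ht (hX.symm.mem_of_mem_adj hvT hvc) hc] at hvc

lemma exists_branch_eq_singleton (hX : X.G.IsBipartiteWith X.T (↑X.T)ᶜ) {w : M.Y.V}
    (hw : w ∉ M.Y.T) : ∃ v ∉ X.T, M.branch w = {v} := by
  obtain ⟨v, hv⟩ := M.branch_nonempty w
  refine ⟨v, M.notMem_T_of_mem_branch hw hv,
    Finset.eq_singleton_iff_unique_mem.mpr ⟨hv, fun u hu => ?_⟩⟩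
  by_contra hne
  obtain ⟨c, hc, huc⟩ := M.exists_adj_mem_branch hu hv hne
  exact M.notMem_T_of_mem_branch hw hc
    (hX.symm.mem_of_mem_adj (M.notMem_T_of_mem_branch hw hu) huc)

lemma adj_of_adj_node (hX : X.G.IsBipartiteWith X.T (↑X.T)ᶜ) {w : M.Y.V} {v t : X.V}
    (hw : M.branch w = {v}) (hvT : v ∉ X.T) (ht : t ∈ X.T)
    (h : M.Y.G.Adj w (M.node t)) : X.G.Adj v t := by
  obtain ⟨a, ha, b, hb, hab⟩ := M.adj_mapsDown _ _ h
  rw [hw, Finset.mem_singleton] at ha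
  subst ha
  rwa [M.eq_of_mem_branch_node ht (hX.symm.mem_of_mem_adj hvT hab) hb] at hab

lemma not_adj_of_notMem_T (hX : X.G.IsBipartiteWith X.T (↑X.T)ᶜ) {w w' : M.Y.V}
    (hw : w ∉ M.Y.T) (hw' : w' ∉ M.Y.T) : ¬ M.Y.G.Adj w w' := by
  obtain ⟨v, hvT, hv⟩ := M.exists_branch_eq_singleton hX hw
  obtain ⟨v', hvT', hv'⟩ := M.exists_branch_eq_singleton hX hw'
  intro h
  obtain ⟨a, ha, b, hb, hab⟩ := M.adj_mapsDown _ _ h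
  rw [hv, Finset.mem_singleton] at ha
  rw [hv', Finset.mem_singleton] at hb
  subst ha hb
  exact hvT' (hX.symm.mem_of_mem_adj hvT hab)

section CommonNeighbor

variable {s₁ s₂ z : X.V}

lemma not_adj_node_node (hX : X.G.IsBipartiteWith X.T (↑X.T)ᶜ) (hs₁ : s₁ ∈ X.T)
    (hs₂ : s₂ ∈ X.T) (huniq : ∀ v, X.G.Adj s₁ v → X.G.Adj v s₂ → v = z)
    (hz₁ : z ∉ M.branch (M.node s₁)) (hz₂ : z ∉ M.branch (M.node s₂)) :
    ¬ M.Y.G.Adj (M.node s₁) (M.node s₂) := by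
  intro h
  obtain ⟨a, ha, b, hb, hab⟩ := M.adj_mapsDown _ _ h
  by_cases haT : a ∈ X.T
  · rw [M.eq_of_mem_branch_node hs₁ haT ha] at hab
    have hbT : b ∉ X.T := hX.mem_of_mem_adj hs₁ hab
    exact hz₂ (huniq b hab (M.adj_of_mem_branch_node hX hs₂ hb hbT) ▸ hb)
  · have hbT : b ∈ X.T := hX.symm.mem_of_mem_adj haT hab
    rw [M.eq_of_mem_branch_node hs₂ hbT hb] at hab
    exact hz₁ (huniq a (M.adj_of_mem_branch_node hX hs₁ ha haT).symm hab ▸ ha)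

lemma not_adj_node_of_adj_node (hX : X.G.IsBipartiteWith X.T (↑X.T)ᶜ) (hs₁ : s₁ ∈ X.T)
    (hs₂ : s₂ ∈ X.T) (huniq : ∀ v, X.G.Adj s₁ v → X.G.Adj v s₂ → v = z)
    (hsingle : ∀ w, M.branch w ≠ {z}) {w : M.Y.V} (hw : w ∉ M.Y.T)
    (h₁ : M.Y.G.Adj w (M.node s₁)) : ¬ M.Y.G.Adj w (M.node s₂) := by
  intro h₂
  obtain ⟨v, hvT, hv⟩ := M.exists_branch_eq_singleton hX hw
  have hvz := huniq v (M.adj_of_adj_node hX hv hvT hs₁ h₁).symm (M.adj_of_adj_node hX hv hvT hs₂ h₂)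
  exact hsingle w (hvz ▸ hv)

lemma exists_node_mem_support (hX : X.G.IsBipartiteWith X.T (↑X.T)ᶜ) (hs₁ : s₁ ∈ X.T)
    (hs₂ : s₂ ∈ X.T) (hne : s₁ ≠ s₂) (huniq : ∀ v, X.G.Adj s₁ v → X.G.Adj v s₂ → v = z)
    (hsingle : ∀ w, M.branch w ≠ {z}) (hz₁ : z ∉ M.branch (M.node s₁))
    (hz₂ : z ∉ M.branch (M.node s₂)) (p : M.Y.G.Walk (M.node s₁) (M.node s₂)) :
    ∃ σ ∈ X.T, σ ≠ s₁ ∧ σ ≠ s₂ ∧ M.node σ ∈ p.support := by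
  -- `p` has to leave the start node together with its non-terminal neighbours; the non-terminal
  -- nodes form an independent set, so it leaves them through a terminal node.
  let S : Set M.Y.V := {w | w = M.node s₁ ∨ (w ∉ M.Y.T ∧ M.Y.G.Adj (M.node s₁) w)}
  have hs₂S : M.node s₂ ∉ S := by
    rintro (h | ⟨h, -⟩)
    · exact hne (M.node_inj _ hs₁ _ hs₂ h.symm)
    · exact h (M.node_terminal _ hs₂)
  obtain ⟨d, hd, hfst, hsnd⟩ := p.exists_boundary_dart S (Or.inl rfl) hs₂S
  have hsndT : d.snd ∈ M.Y.T := by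
    by_contra hT
    rcases hfst with h | ⟨hfT, -⟩
    · exact hsnd (Or.inr ⟨hT, h ▸ d.adj⟩)
    · exact M.not_adj_of_notMem_T hX hfT hT d.adj
  obtain ⟨σ, hσ, hσd⟩ := M.terminal_node _ hsndT
  refine ⟨σ, hσ, ?_, ?_, hσd ▸ p.dart_snd_mem_support_of_mem_darts hd⟩
  · rintro rfl
    exact hsnd (Or.inl hσd.symm)
  · rintro rfl
    rcases hfst with h | ⟨hfT, hadj⟩
    · exact M.not_adj_node_node hX hs₁ hs₂ huniq hz₁ hz₂ (h ▸ hσd ▸ d.adj)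
    · exact M.not_adj_node_of_adj_node hX hs₁ hs₂ huniq hsingle hfT hadj.symm (hσd ▸ d.adj)

theorem two_mul_le_dist_node (hX : X.G.IsBipartiteWith X.T (↑X.T)ᶜ) {δ : ℝ} (hδ : 0 < δ)
    (hsep : ∀ t ∈ X.T, ∀ t' ∈ X.T, t ≠ t' → δ ≤ X.dist t t') (hM : M.Dominates)
    (hs₁ : s₁ ∈ X.T) (hs₂ : s₂ ∈ X.T) (hne : s₁ ≠ s₂)
    (huniq : ∀ v, X.G.Adj s₁ v → X.G.Adj v s₂ → v = z)
    (hsingle : ∀ w, M.branch w ≠ {z}) (hz₁ : z ∉ M.branch (M.node s₁))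
    (hz₂ : z ∉ M.branch (M.node s₂)) :
    2 * δ ≤ M.Y.dist (M.node s₁) (M.node s₂) := by
  have hsepY : ∀ t ∈ X.T, ∀ t' ∈ X.T, t ≠ t' → δ ≤ M.Y.dist (M.node t) (M.node t') :=
    fun t ht t' ht' htt' => (hsep t ht t' ht' htt').trans (hM t ht t' ht')
  refine le_gdist (reachable_of_pos_gdist (hδ.trans_le (hsepY _ hs₁ _ hs₂ hne))) fun p => ?_
  obtain ⟨σ, hσ, hσ₁, hσ₂, hσp⟩ :=
    M.exists_node_mem_support hX hs₁ hs₂ hne huniq hsingle hz₁ hz₂ p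
  rw [two_mul]
  exact add_le_walkLen_of_mem_support hδ hδ (hsepY _ hs₁ _ hσ hσ₁.symm) (hsepY _ hσ _ hs₂ hσ₂) hσp

theorem exists_branch_eq_singleton_or_mem_branch_node (hX : X.G.IsBipartiteWith X.T (↑X.T)ᶜ)
    {δ : ℝ} (hδ : 0 < δ) (hsep : ∀ t ∈ X.T, ∀ t' ∈ X.T, t ≠ t' → δ ≤ X.dist t t')
    {α : ℝ} (hα : α < 2) (hM : M.IsDAM α) (hs₁ : s₁ ∈ X.T) (hs₂ : s₂ ∈ X.T) (hne : s₁ ≠ s₂)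
    (hd : X.dist s₁ s₂ ≤ δ) (huniq : ∀ v, X.G.Adj s₁ v → X.G.Adj v s₂ → v = z) :
    (∃ w, M.branch w = {z}) ∨ z ∈ M.branch (M.node s₁) ∨ z ∈ M.branch (M.node s₂) := by
  by_contra! h
  obtain ⟨hsingle, hz₁, hz₂⟩ := h
  have hlower := M.two_mul_le_dist_node hX hδ hsep hM.dominates hs₁ hs₂ hne huniq hsingle hz₁ hz₂
  have hupper := (hM _ hs₁ _ hs₂).2
  rw [le_antisymm hd (hsep _ hs₁ _ hs₂ hne)] at hupper
  nlinarith

end CommonNeighbor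

end MinorOf

namespace AdditionTable

variable {m : ℕ}

variable (m) in
/-- Line `(i, a)` is row `a`, column `a` or symbol `a` of the addition table, for `i = 0, 1, 2`. -/
abbrev Line := Fin 3 × ZMod m

variable (m) in
abbrev Cell := ZMod m × ZMod m

def coord (z : Cell m) : Fin 3 → ZMod m := ![z.1, z.2, z.1 + z.2]

lemma eq_of_coord_eq {i j : Fin 3} (hij : i ≠ j) {z z' : Cell m}
    (hi : coord z i = coord z' i) (hj : coord z j = coord z' j) : z = z' := by
  obtain ⟨x, y⟩ := z
  obtain ⟨x', y'⟩ := z'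
  fin_cases i <;> fin_cases j <;> simp_all [coord]

lemma exists_coord_eq {i j : Fin 3} (hij : i ≠ j) (a b : ZMod m) :
    ∃ z : Cell m, coord z i = a ∧ coord z j = b := by
  fin_cases i <;> fin_cases j <;> simp at hij
  · exact ⟨(a, b), by simp [coord]⟩
  · exact ⟨(a, b - a), by simp [coord]⟩
  · exact ⟨(b, a), by simp [coord]⟩
  · exact ⟨(b - a, a), by simp [coord]⟩
  · exact ⟨(b, a - b), by simp [coord]⟩
  · exact ⟨(a - b, b), by simp [coord]⟩

variable (m) in
def graph : SimpleGraph (Line m ⊕ Cell m) where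
  Adj
    | .inl t, .inr z | .inr z, .inl t => coord z t.1 = t.2
    | _, _ => False
  symm := ⟨by rintro (_ | _) (_ | _) h <;> exact h⟩
  loopless := ⟨by rintro (_ | _) h <;> exact h⟩

@[simp] lemma graph_adj_inl_inr {t : Line m} {z : Cell m} :
    (graph m).Adj (.inl t) (.inr z) ↔ coord z t.1 = t.2 := Iff.rfl

@[simp] lemma graph_adj_inr_inl {t : Line m} {z : Cell m} :
    (graph m).Adj (.inr z) (.inl t) ↔ coord z t.1 = t.2 := Iff.rfl

@[simp] lemma not_graph_adj_inl_inl {t t' : Line m} : ¬ (graph m).Adj (.inl t) (.inl t') :=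
  id

@[simp] lemma not_graph_adj_inr_inr {z z' : Cell m} : ¬ (graph m).Adj (.inr z) (.inr z') :=
  id

lemma graph_reachable_of_fst_ne {s t : Line m} (h : s.1 ≠ t.1) :
    (graph m).Reachable (.inl s) (.inl t) := by
  obtain ⟨z, hs, ht⟩ := exists_coord_eq h s.2 t.2
  exact (graph_adj_inl_inr.mpr hs).reachable.trans (graph_adj_inr_inl.mpr ht).reachable

lemma graph_reachable (s t : Line m) : (graph m).Reachable (.inl s) (.inl t) := by
  by_cases h : s.1 = t.1
  · have hne : s.1 ≠ s.1 + 1 := by simp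
    exact (graph_reachable_of_fst_ne (t := (s.1 + 1, 0)) hne).trans
      (graph_reachable_of_fst_ne (h ▸ hne.symm))
  · exact graph_reachable_of_fst_ne h

lemma two_le_length_of_ne {s t : Line m} (hst : s ≠ t) (p : (graph m).Walk (.inl s) (.inl t)) :
    2 ≤ p.length := by
  match p with
  | .nil => exact absurd rfl hst
  | .cons h .nil => exact absurd h not_graph_adj_inl_inl
  | .cons _ (.cons _ _) => simp

variable [NeZero m]

variable (m) in
noncomputable abbrev termGraph : TermGraph where
  V := Line m ⊕ Cell m
  fintypeV := inferInstance
  decEqV := inferInstance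
  G := graph m
  len _ _ := 1
  T := Finset.univ.map .inl

@[simp] lemma inl_mem_T (t : Line m) : (.inl t : (termGraph m).V) ∈ (termGraph m).T :=
  Finset.mem_map_of_mem _ (Finset.mem_univ t)

@[simp] lemma inr_notMem_T (z : Cell m) : (.inr z : (termGraph m).V) ∉ (termGraph m).T := by
  simp [termGraph]

lemma card_T : (termGraph m).T.card = 3 * m := by
  simp [termGraph]

lemma termGraph_goodLen : (termGraph m).goodLen :=
  ⟨fun _ _ => rfl, fun _ _ _ => one_pos⟩

lemma termGraph_isBipartiteWith :
    (termGraph m).G.IsBipartiteWith (termGraph m).T (↑(termGraph m).T)ᶜ where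
  disjoint := disjoint_compl_right
  mem_of_adj := by
    rintro (t | z) (t' | z') h
    · exact absurd h not_graph_adj_inl_inl
    · exact .inl ⟨inl_mem_T t, inr_notMem_T z'⟩
    · exact .inr ⟨inr_notMem_T z, inl_mem_T t'⟩
    · exact absurd h not_graph_adj_inr_inr

lemma two_le_dist_of_ne {s t : Line m} (hst : s ≠ t) :
    2 ≤ (termGraph m).dist (.inl s) (.inl t) :=
  le_gdist (graph_reachable s t) fun p => by
    rw [walkLen_const, mul_one]
    exact_mod_cast two_le_length_of_ne hst p

lemma termGraph_sep : ∀ t ∈ (termGraph m).T, ∀ t' ∈ (termGraph m).T, t ≠ t' →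
    2 ≤ (termGraph m).dist t t' := by
  simp only [termGraph, Finset.mem_map, Finset.mem_univ, true_and]
  rintro _ ⟨s, rfl⟩ _ ⟨t, rfl⟩ hst
  exact two_le_dist_of_ne (fun h => hst (congrArg _ h))

lemma dist_le_two (z : Cell m) (i j : Fin 3) :
    (termGraph m).dist (.inl (i, coord z i)) (.inl (j, coord z j)) ≤ 2 := by
  have hi : (graph m).Adj (.inl (i, coord z i)) (.inr z) := graph_adj_inl_inr.mpr rfl
  have hj : (graph m).Adj (.inr z) (.inl (j, coord z j)) := graph_adj_inr_inl.mpr rfl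
  refine (gdist_le_walkLen (fun _ _ => zero_le_one) (.cons hi (.cons hj .nil))).trans ?_
  norm_num [termGraph]

lemma eq_of_adj_of_adj {z : Cell m} {i j : Fin 3} (hij : i ≠ j) (v : (termGraph m).V)
    (hi : (graph m).Adj (.inl (i, coord z i)) v) (hj : (graph m).Adj v (.inl (j, coord z j))) :
    v = .inr z := by
  rcases v with t | z'
  · exact absurd hi not_graph_adj_inl_inl
  · exact congrArg _ (eq_of_coord_eq hij (graph_adj_inl_inr.mp hi) (graph_adj_inr_inl.mp hj))

lemma exists_branch_eq_singleton_inr (M : MinorOf (termGraph m)) {α : ℝ} (hα : α < 2)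
    (hM : M.IsDAM α) (z : Cell m) : ∃ w, M.branch w = {.inr z} := by
  let B (i : Fin 3) := M.branch (M.node (.inl (i, coord z i)))
  have hpair : ∀ i j, i ≠ j → (∃ w, M.branch w = {.inr z}) ∨ .inr z ∈ B i ∨ .inr z ∈ B j :=
    fun i j hij => M.exists_branch_eq_singleton_or_mem_branch_node termGraph_isBipartiteWith
      two_pos termGraph_sep hα hM (inl_mem_T _) (inl_mem_T _) (by simp [hij])
      (dist_le_two z i j) (eq_of_adj_of_adj hij)
  have hexcl : ∀ i j, i ≠ j → .inr z ∈ B i → .inr z ∉ B j := fun i j hij hi =>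
    Finset.disjoint_left.mp (M.branch_disjoint _ _ fun h => by
      simpa [hij] using M.node_inj _ (inl_mem_T _) _ (inl_mem_T _) h) hi
  -- `z` lies in at most one of the branch sets `B i`, so one of the three pairs of its lines
  -- leaves it to its own branch set.
  rcases hpair 1 2 (by decide) with h | h₁ | h₂
  · exact h
  · rcases hpair 0 2 (by decide) with h | h₀ | h₂
    · exact h
    · exact absurd h₁ (hexcl 0 1 (by decide) h₀)
    · exact absurd h₂ (hexcl 1 2 (by decide) h₁)
  · rcases hpair 0 1 (by decide) with h | h₀ | h₁
    · exact h
    · exact absurd h₂ (hexcl 0 2 (by decide) h₀)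
    · exact absurd h₂ (hexcl 1 2 (by decide) h₁)

lemma sq_le_nonTerms (M : MinorOf (termGraph m)) {α : ℝ} (hα : α < 2) (hM : M.IsDAM α) :
    m ^ 2 ≤ M.nonTerms := by
  have hcard : (Finset.univ.map (.inr : Cell m ↪ Line m ⊕ Cell m)).card = m ^ 2 := by
    simp [sq]
  rw [← hcard]
  refine M.card_le_nonTerms (by simp [termGraph]) ?_
  simp only [Finset.mem_map, Finset.mem_univ, true_and]
  rintro _ ⟨z, rfl⟩
  exact exists_branch_eq_singleton_inr M hα hM z

end AdditionTable

/-- For every `ε > 0` there is a constant `c > 0` such that for infinitely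
many `k` there is a graph `G` with `k` terminals on which every minor with distortion at
most `2 - ε` must have at least `c·k²` non-terminals. -/
theorem dam_lower_bound_distortion_two (ε : ℝ) (hε : 0 < ε) :
    ∃ c : ℝ, 0 < c ∧
      ∀ n : ℕ, ∃ k : ℕ, n ≤ k ∧
        ∃ X : TermGraph, X.goodLen ∧ X.T.card = k ∧
          ∀ M : MinorOf X, M.IsDAM (2 - ε) →
            c * (k : ℝ) ^ 2 ≤ (M.nonTerms : ℝ) := by
  refine ⟨1 / 9, by norm_num, fun n => ⟨3 * (n + 1), by omega, AdditionTable.termGraph (n + 1),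
    AdditionTable.termGraph_goodLen, AdditionTable.card_T, fun M hM => ?_⟩⟩
  have h : (((n + 1) ^ 2 : ℕ) : ℝ) ≤ M.nonTerms := by
    exact_mod_cast AdditionTable.sq_le_nonTerms M (by linarith) hM
  push_cast at h ⊢
  linarith
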